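/- Let ℵ be an infinite cardinal and X_i = ∏_{s∈S_i} X_{i,s} (i = 1,…,n) products of metrizable spaces with |S₁| > ℵ, each factor having at least two points, and X = X₁ × ⋯ × Xₙ. Then the following are equivalent: (i) every separately continuous f : X₁ × ⋯ × Xₙ → ℝ depends on at most ℵ coordinates; (iii) every continuous f : X → ℝ depends on at most ℵ coordinates; (x) d(X_{i,s}) ≤ ℵ for all i, s. -/

import Mathlib

/-!
(x) ⇒ (i): a product of spaces of density `≤ ℵ` has property `(III_ℵ)`, by the Δ-system lemma
applied to the supports of basic open sets. A continuous function `f` on such a product has at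
most `ℵ` essential coordinates: each essential coordinate `s` gives a nonempty open set of points
at which `s` is still essential, and a point lies in only countably many of these, because
modifying it at infinitely many distinct coordinates converges to it. Moreover `f` depends only
on its essential coordinates, since finite modifications are dense. For a separately continuous
`f`, more than `ℵ` witnesses of essential coordinates in block `j` would, by `(III_ℵ)` applied
in the other blocks one at a time, yield more than `ℵ` such witnesses for a single continuous
section `y ↦ f (update w j y)`.

(iii) ⇒ (x): if `d(X_{i,s}) > ℵ`, some `r`-separated set in `X_{i,s}` has more than `ℵ` points
`y_k`; gluing, over bumps around the `y_k`, nonconstant functions of distinct coordinates `k` of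
`S₁` gives a continuous function that depends on more than `ℵ` coordinates.
-/

universe u

open Cardinal

/-- Property (I_ℵ): every locally finite family of nonempty open sets has cardinality ≤ ℵ. -/
def PropI (c : Cardinal.{u}) (X : Type u) [TopologicalSpace X] : Prop :=
  ∀ (I : Type u) (U : I → Set X), (∀ i, IsOpen (U i)) → (∀ i, (U i).Nonempty) →
    LocallyFinite U → #I ≤ c

/-- Property (II_ℵ): every pointwise finite family of nonempty open sets has cardinality ≤ ℵ. -/
def PropII (c : Cardinal.{u}) (X : Type u) [TopologicalSpace X] : Prop :=
  ∀ (I : Type u) (U : I → Set X), (∀ i, IsOpen (U i)) → (∀ i, (U i).Nonempty) →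
    (∀ x : X, {i | x ∈ U i}.Finite) → #I ≤ c

/-- Property (III_ℵ): every ℵ-pointwise family of nonempty open sets has cardinality ≤ ℵ. -/
def PropIII (c : Cardinal.{u}) (X : Type u) [TopologicalSpace X] : Prop :=
  ∀ (I : Type u) (U : I → Set X), (∀ i, IsOpen (U i)) → (∀ i, (U i).Nonempty) →
    (∀ x : X, #{i | x ∈ U i} ≤ c) → #I ≤ c

open Set Filter Topology Function

variable {c : Cardinal.{u}}

lemma Cardinal.mk_iUnion_le_of_le {α ι : Type u} (hc : ℵ₀ ≤ c) {f : ι → Set α} (hι : #ι ≤ c)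
    (hf : ∀ i, #(f i) ≤ c) : #(⋃ i, f i) ≤ c :=
  (mk_iUnion_le f).trans <| (mul_le_mul' hι (ciSup_le' hf)).trans (mul_eq_self hc).le

lemma Cardinal.exists_lt_mk_fiber {α β : Type u} (hc : ℵ₀ ≤ c) {A : Set α} (hA : c < #A)
    (g : α → β) (hg : #(range g) ≤ c) : ∃ b, c < #{a ∈ A | g a = b} := by
  by_contra! h
  refine hA.not_ge <| (mk_le_mk_of_subset fun a ha => ?_).trans
    (mk_iUnion_le_of_le hc hg fun b : range g => h b)
  exact mem_iUnion.2 ⟨⟨g a, mem_range_self a⟩, ha, rfl⟩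

lemma Cardinal.mk_pi_le_of_le {ι : Type u} [Finite ι] {β : ι → Type u} (hc : ℵ₀ ≤ c)
    (h : ∀ i, #(β i) ≤ c) : #(∀ i, β i) ≤ c := by
  rw [mk_pi]
  refine (prod_le_prod _ (fun _ => c) h).trans ?_
  rw [prod_const, lift_id, lift_id]
  exact pow_le hc (lt_aleph0_of_finite ι)

lemma Cardinal.exists_subset_lt_mk_embedding {α β : Type u} {A : Set α} (hA : c < #A)
    (hβ : c < #β) : ∃ A' ⊆ A, c < #A' ∧ Nonempty (A' ↪ β) := by
  rcases le_total #A #β with h | h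
  · exact ⟨A, subset_rfl, hA, (le_def _ _).1 h⟩
  · obtain ⟨A', hA'A, hA'⟩ := le_mk_iff_exists_subset.1 h
    exact ⟨A', hA'A, hA' ▸ hβ, (le_def _ _).1 hA'.le⟩

lemma Cardinal.lt_mk_compl_of_subsingleton {α : Type u} (hc : ℵ₀ ≤ c) (hα : c < #α)
    {s : Set α} (hs : s.Subsingleton) : c < #(sᶜ : Set α) := by
  have : Infinite α := infinite_iff.2 (hc.trans hα.le)
  rwa [mk_compl_of_infinite s ((mk_le_one_iff_set_subsingleton.2 hs).trans_lt
    (one_lt_aleph0.trans_le (hc.trans hα.le)))]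

lemma exists_maximal_pairwise_subset {α : Type*} (r : α → α → Prop) (A : Set α) :
    ∃ M, Maximal (fun M => M ⊆ A ∧ M.Pairwise r) M :=
  zorn_subset _ fun C hCA hC => ⟨⋃₀ C, ⟨sUnion_subset fun _ hs => (hCA hs).1,
    hC.pairwise_sUnion.2 fun _ hs => (hCA hs).2⟩, fun _ => subset_sUnion_of_mem⟩

lemma Maximal.exists_not_rel_of_notMem {α : Type*} {r : α → α → Prop} {A M : Set α}
    (hM : Maximal (fun M => M ⊆ A ∧ M.Pairwise r) M) {a : α} (ha : a ∈ A) (haM : a ∉ M) :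
    ∃ b ∈ M, ¬ (r a b ∧ r b a) := by
  by_contra! h
  exact haM <| hM.mem_of_prop_insert
    ⟨insert_subset ha hM.prop.1, hM.prop.2.insert_of_notMem haM h⟩

lemma Finset.exists_lt_mk_pairwise_disjoint {α ι : Type u} (hc : ℵ₀ ≤ c) (F : ι → Finset α)
    {A : Set ι} (hA : c < #A) (hpt : ∀ x, #{i ∈ A | x ∈ F i} ≤ c) :
    ∃ B ⊆ A, c < #B ∧ B.Pairwise fun i j => Disjoint (F i) (F j) := by
  obtain ⟨M, hM⟩ := exists_maximal_pairwise_subset (fun i j => Disjoint (F i) (F j)) A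
  refine ⟨M, hM.prop.1, lt_of_not_ge fun hMc => hA.not_ge ?_, hM.prop.2⟩
  set U := ⋃ i : M, (F i : Set α)
  have hU : #U ≤ c := mk_iUnion_le_of_le hc hMc fun i => (lt_aleph0_of_finite _).le.trans hc
  have hAU : A ⊆ M ∪ ⋃ x : U, {i ∈ A | (x : α) ∈ F i} := by
    intro j hj
    by_cases hjM : j ∈ M
    · exact Or.inl hjM
    obtain ⟨b, hbM, hjb⟩ := hM.exists_not_rel_of_notMem hj hjM
    obtain ⟨x, hxj, hxb⟩ := Finset.not_disjoint_iff.1 fun h => hjb ⟨h, h.symm⟩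
    exact Or.inr <| mem_iUnion.2 ⟨⟨x, mem_iUnion.2 ⟨⟨b, hbM⟩, hxb⟩⟩, hj, hxj⟩
  calc #A ≤ #M + #(⋃ x : U, {i ∈ A | (x : α) ∈ F i}) :=
        (mk_le_mk_of_subset hAU).trans (mk_union_le _ _)
    _ ≤ c + c := add_le_add hMc (mk_iUnion_le_of_le hc hU fun x => hpt x)
    _ = c := add_eq_self hc

lemma Finset.exists_lt_mk_deltaSystem_of_card_eq {α ι : Type u} [DecidableEq α] (hc : ℵ₀ ≤ c)
    (p : ℕ) (F : ι → Finset α) {A : Set ι} (hcard : ∀ i ∈ A, (F i).card = p) (hA : c < #A) :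
    ∃ B ⊆ A, c < #B ∧ ∃ R : Finset α, B.Pairwise fun i j => F i ∩ F j = R := by
  induction p generalizing F A with
  | zero =>
    refine ⟨A, subset_rfl, hA, ∅, fun i hi j _ _ => ?_⟩
    simp only [Finset.card_eq_zero.1 (hcard i hi), Finset.empty_inter]
  | succ p ih =>
    by_cases hpt : ∀ x, #{i ∈ A | x ∈ F i} ≤ c
    · obtain ⟨B, hBA, hB, hdisj⟩ := Finset.exists_lt_mk_pairwise_disjoint hc F hA hpt
      exact ⟨B, hBA, hB, ∅, hdisj.mono' fun i j => Finset.disjoint_iff_inter_eq_empty.1⟩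
    push Not at hpt
    obtain ⟨x, hx⟩ := hpt
    obtain ⟨B, hBA, hB, R, hR⟩ := ih (fun i => (F i).erase x) (A := {i ∈ A | x ∈ F i})
      (fun i hi => by rw [Finset.card_erase_of_mem hi.2, hcard i hi.1, Nat.add_sub_cancel]) hx
    refine ⟨B, fun i hi => (hBA hi).1, hB, insert x R, fun i hi j hj hij => ?_⟩
    rw [← hR hi hj hij]
    ext y
    by_cases hy : y = x <;> simp [hy, (hBA hi).2, (hBA hj).2]

lemma Finset.exists_lt_mk_deltaSystem {α ι : Type u} [DecidableEq α] (hc : ℵ₀ ≤ c)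
    (F : ι → Finset α) {A : Set ι} (hA : c < #A) :
    ∃ B ⊆ A, c < #B ∧ ∃ R : Finset α, B.Pairwise fun i j => F i ∩ F j = R := by
  obtain ⟨p, hp⟩ := exists_lt_mk_fiber hc hA (fun i => ULift.up.{u} (F i).card)
    (mk_le_aleph0.trans hc)
  obtain ⟨B, hBA, hB, hR⟩ := exists_lt_mk_deltaSystem_of_card_eq hc p.down F
    (fun i hi => congrArg ULift.down hi.2) hp
  exact ⟨B, fun i hi => (hBA hi).1, hB, hR⟩

lemma PropIII.exists_lt_mk_setOf_mem {X : Type u} [TopologicalSpace X] (hX : PropIII c X)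
    {I : Type u} {U : I → Set X} (hU : ∀ i, IsOpen (U i)) (hne : ∀ i, (U i).Nonempty)
    (hI : c < #I) : ∃ x, c < #{i | x ∈ U i} := by
  by_contra! h
  exact hI.not_ge (hX I U hU hne h)

lemma exists_forall_mem_pi_of_pairwise_inter_eq {S I : Type*} [DecidableEq S] {Y : S → Type*}
    {F : I → Finset S} {w : I → ∀ s, Set (Y s)} {B : Set I} {R : Finset S}
    (hR : B.Pairwise fun i j => F i ∩ F j = R) (p : I → ∀ s, Y s)
    (hp : ∀ i ∈ B, ∀ s ∈ F i, p i s ∈ w i s) (z : ∀ s, Y s) (hz : ∀ i ∈ B, ∀ s ∈ R, z s ∈ w i s) :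
    ∃ x : ∀ s, Y s, ∀ i ∈ B, x ∈ (F i : Set S).pi (w i) := by
  classical
  refine ⟨fun s => if h : ∃ i ∈ B, s ∈ F i ∧ s ∉ R then p h.choose s else z s,
    fun i hi s hs => ?_⟩
  by_cases hsR : s ∈ R
  · simpa [hsR] using hz i hi s hsR
  have h : ∃ i ∈ B, s ∈ F i ∧ s ∉ R := ⟨i, hi, hs, hsR⟩
  obtain ⟨hjB, hsj, -⟩ := h.choose_spec
  have hji : h.choose = i := by
    by_contra hji
    exact hsR (hR hjB hi hji ▸ Finset.mem_inter.2 ⟨hsj, hs⟩)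
  simpa [dif_pos h, hji] using hp i hi s hs

/-- Shrink the open sets to basic boxes, pass to a Δ-system of their supports, and fix the
(at most `c` possible) choices of points of the dense sets on the root. -/
theorem propIII_pi {S : Type u} {Y : S → Type u} [∀ s, TopologicalSpace (Y s)] (hc : ℵ₀ ≤ c)
    (hY : ∀ s, ∃ D : Set (Y s), Dense D ∧ #D ≤ c) : PropIII c (∀ s, Y s) := by
  classical
  intro I U hUo hUne hpt
  by_contra! hI
  choose D hD hDc using hY
  choose p hp using hUne
  choose F w hw hFw using fun i => isOpen_pi_iff.1 (hUo i) (p i) (hp i)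
  obtain ⟨B, -, hB, R, hR⟩ := Finset.exists_lt_mk_deltaSystem hc F (A := univ) (by rwa [mk_univ])
  have hRF : ∀ i ∈ B, R ⊆ F i := by
    intro i hi
    have hBinf : B.Infinite := infinite_coe_iff.1 (infinite_iff.2 (hc.trans hB.le))
    obtain ⟨j, hjB, hji⟩ := (hBinf.sdiff (finite_singleton i)).nonempty
    rw [← hR hi hjB (Ne.symm hji)]
    exact Finset.inter_subset_left
  have hdense : ∀ i (t : R), ∃ e : D t, i ∈ B → (e : Y t) ∈ w i t := by
    intro i t
    by_cases hi : i ∈ B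
    · have ht := hw i t (hRF i hi t.2)
      obtain ⟨e, heD, hew⟩ := (hD t).exists_mem_open ht.1 ⟨p i t, ht.2⟩
      exact ⟨⟨e, heD⟩, fun _ => hew⟩
    · obtain ⟨e, he⟩ := (hD t).nonempty_iff.2 ⟨p i t⟩
      exact ⟨⟨e, he⟩, fun h => absurd h hi⟩
  choose d hd using hdense
  obtain ⟨d', hd'⟩ := exists_lt_mk_fiber hc hB d
    ((mk_set_le _).trans (mk_pi_le_of_le hc fun t => hDc t))
  obtain ⟨i₀⟩ : Nonempty I := mk_ne_zero_iff.1 (pos_of_gt hI).ne'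
  obtain ⟨x, hx⟩ := exists_forall_mem_pi_of_pairwise_inter_eq (B := {i ∈ B | d i = d'})
    (hR.mono fun _ hi => hi.1) p (fun i _ s hs => (hw i s hs).2)
    (fun s => if h : s ∈ R then (d' ⟨s, h⟩ : Y s) else p i₀ s)
    (fun i hi s hs => by
      rw [dif_pos hs, ← hi.2]
      exact hd i ⟨s, hs⟩ hi.1)
  exact (hd'.trans_le (mk_le_mk_of_subset fun i hi => hFw i (hx i hi))).not_ge (hpt x)

section EssentialCoords

variable {S : Type*} {Y : S → Type*} {β : Type*}

def essentialCoords (f : (∀ s, Y s) → β) : Set S :=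
  {s | ∃ x z : ∀ t, Y t, (∀ t ≠ s, x t = z t) ∧ f x ≠ f z}

lemma apply_update_eq_of_notMem_essentialCoords [DecidableEq S] {f : (∀ s, Y s) → β} {s : S}
    (hs : s ∉ essentialCoords f) (x : ∀ t, Y t) (z : Y s) : f (update x s z) = f x := by
  by_contra h
  exact hs ⟨update x s z, x, fun t ht => update_of_ne ht _ _, h⟩

lemma Finset.apply_piecewise_eq_of_forall_update [DecidableEq S] (f : (∀ s, Y s) → β)
    {u v : ∀ s, Y s} (J : Finset S) (h : ∀ s ∈ J, ∀ x, x s = u s → f (update x s (v s)) = f x) :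
    f (J.piecewise v u) = f u := by
  induction J using Finset.induction_on with
  | empty => rw [Finset.piecewise_empty]
  | insert s J hs ih =>
    rw [Finset.piecewise_insert, h s (J.mem_insert_self s) _ (J.piecewise_eq_of_notMem _ _ hs),
      ih fun t ht => h t (Finset.mem_insert_of_mem ht)]

variable [∀ s, TopologicalSpace (Y s)]

lemma tendsto_finset_piecewise_atTop [DecidableEq S] (y z : ∀ s, Y s) :
    Tendsto (fun J : Finset S => J.piecewise y z) atTop (𝓝 y) :=
  tendsto_pi_nhds.2 fun s => tendsto_const_nhds.congr' <|
    (eventually_ge_atTop {s}).mono fun J hJ =>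
      (J.piecewise_eq_of_mem _ _ (hJ (Finset.mem_singleton_self s))).symm

lemma tendsto_update_cofinite [DecidableEq S] {ι : Type*} {σ : ι → S} (hσ : Injective σ)
    (x : ∀ s, Y s) (a : ∀ i, Y (σ i)) :
    Tendsto (fun i => update x (σ i) (a i)) cofinite (𝓝 x) :=
  tendsto_pi_nhds.2 fun s => tendsto_const_nhds.congr' <|
    (hσ.tendsto_cofinite.eventually (eventually_cofinite_ne s)).mono fun _ hi =>
      (update_of_ne (Ne.symm hi) _ _).symm

variable [TopologicalSpace β] {f : (∀ s, Y s) → β}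

/-- `f` takes the value `f z` at every modification of `z` towards `y` on finitely many
coordinates, and these modifications converge to `y`. -/
lemma Continuous.dependsOn_essentialCoords [T2Space β] (hf : Continuous f) :
    DependsOn f (essentialCoords f) := by
  classical
  intro y z hyz
  have hfin : ∀ J : Finset S, f (J.piecewise y z) = f z := fun J =>
    J.apply_piecewise_eq_of_forall_update f fun s _ x hxs => by
      by_cases hs : s ∈ essentialCoords f
      · rw [hyz s hs, ← hxs, update_eq_self]
      · exact apply_update_eq_of_notMem_essentialCoords hs x (y s)
  refine tendsto_nhds_unique ((hf.tendsto y).comp (tendsto_finset_piecewise_atTop y z)) ?_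
  simpa only [comp_def, hfin] using tendsto_const_nhds

lemma Continuous.countable_setOf_apply_update_ne [DecidableEq S] [T1Space β]
    [FirstCountableTopology β] (hf : Continuous f) {ι : Type*} {σ : ι → S} (hσ : Injective σ)
    (x : ∀ s, Y s) (a : ∀ i, Y (σ i)) :
    {i | f (Function.update x (σ i) (a i)) ≠ f x}.Countable := by
  have := ((hf.tendsto x).comp (tendsto_update_cofinite hσ x a)).countable_compl_preimage_ker
  rwa [ker_nhds] at this

end EssentialCoords

theorem Continuous.mk_essentialCoords_le {β : Type*} [TopologicalSpace β] [T2Space β]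
    [FirstCountableTopology β] {S : Type u} {Y : S → Type u} [∀ s, TopologicalSpace (Y s)]
    (hc : ℵ₀ ≤ c)
    (hY : PropIII c (∀ s, Y s)) {f : (∀ s, Y s) → β} (hf : Continuous f) :
    #(essentialCoords f) ≤ c := by
  classical
  choose x z hxz hfxz using fun s : essentialCoords f => s.2
  refine hY _ (fun s => {y | f (Function.update y s (z s s)) ≠ f (Function.update y s (x s s))})
    (fun s => ?_) (fun s => ⟨x s, ?_⟩) (fun y => ?_)
  · exact isOpen_ne_fun (hf.comp (continuous_id.update _ continuous_const))
      (hf.comp (continuous_id.update _ continuous_const))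
  · have hz : Function.update (x s) s (z s s) = z s := update_eq_iff.2 ⟨rfl, hxz s⟩
    simpa only [mem_ofPred_eq, hz, update_eq_self] using (hfxz s).symm
  · have hcount := (hf.countable_setOf_apply_update_ne Subtype.val_injective y fun s => z s s).union
      (hf.countable_setOf_apply_update_ne Subtype.val_injective y fun s => x s s)
    refine (mk_le_mk_of_subset fun s hs => ?_).trans
      ((le_aleph0_iff_set_countable.2 hcount).trans hc)
    by_contra h
    simp only [mem_union, mem_ofPred_eq, not_or, not_not] at h
    exact hs (h.1.trans h.2.symm)

section SeparatelyContinuous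

variable {ι : Type*} [DecidableEq ι] {β : Type*} [TopologicalSpace β]

def SeparatelyContinuous {Z : ι → Type*} [∀ i, TopologicalSpace (Z i)] (f : (∀ i, Z i) → β) :
    Prop :=
  ∀ i x, Continuous fun z => f (update x i z)

lemma Continuous.separatelyContinuous {Z : ι → Type*} [∀ i, TopologicalSpace (Z i)]
    {f : (∀ i, Z i) → β} (hf : Continuous f) : SeparatelyContinuous f :=
  fun i _ => hf.comp (continuous_const.update i continuous_id)

variable [T2Space β] {Z : ι → Type u} [∀ i, TopologicalSpace (Z i)] {f : (∀ i, Z i) → β}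

lemma SeparatelyContinuous.exists_lt_mk_setOf_update_ne (hf : SeparatelyContinuous f) {i : ι}
    (hZ : PropIII c (Z i)) {α : Type u} (hα : c < #α) (p q : α → ∀ i, Z i)
    (hpq : ∀ a, p a i = q a i) (hne : ∀ a, f (p a) ≠ f (q a)) :
    ∃ y, c < #{a | f (update (p a) i y) ≠ f (update (q a) i y)} :=
  hZ.exists_lt_mk_setOf_mem (fun a => isOpen_ne_fun (hf i _) (hf i _)) (fun a => ⟨p a i, by
    show f (update (p a) i (p a i)) ≠ f (update (q a) i (p a i))
    rw [update_eq_self, hpq a, update_eq_self]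
    exact hne a⟩) hα

/-- The blocks in `J` are fixed one at a time by `exists_lt_mk_setOf_update_ne`. -/
lemma SeparatelyContinuous.exists_lt_mk_setOf_ne_update (hf : SeparatelyContinuous f) {j : ι}
    (hZ : ∀ i ≠ j, PropIII c (Z i)) (J : Finset ι) {α : Type u} (hα : c < #α)
    (p q : α → ∀ i, Z i) (hpq : ∀ a, ∀ i ≠ j, p a i = q a i) (hne : ∀ a, f (p a) ≠ f (q a))
    (hconst : ∀ a b, ∀ i ∉ J, i ≠ j → p a i = p b i) :
    ∃ w, c < #{a | f (update w j (p a j)) ≠ f (update w j (q a j))} := by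
  induction J using Finset.induction_on generalizing α with
  | empty =>
    obtain ⟨a₀⟩ : Nonempty α := mk_ne_zero_iff.1 (pos_of_gt hα).ne'
    refine ⟨p a₀, hα.trans_le (mk_univ.symm.le.trans (mk_le_mk_of_subset fun a _ => ?_))⟩
    have hp : update (p a₀) j (p a j) = p a :=
      update_eq_iff.2 ⟨rfl, fun i hi => hconst a₀ a i (Finset.notMem_empty i) hi⟩
    have hq : update (p a₀) j (q a j) = q a :=
      update_eq_iff.2 ⟨rfl, fun i hi => (hconst a₀ a i (Finset.notMem_empty i) hi).trans
        (hpq a i hi)⟩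
    simpa only [mem_ofPred_eq, hp, hq] using hne a
  | insert i J hiJ ih =>
    by_cases hij : i = j
    · subst hij
      exact ih hα p q hpq hne fun a b k hk hki => hconst a b k (by simp [hk, hki]) hki
    obtain ⟨y, hy⟩ := hf.exists_lt_mk_setOf_update_ne (hZ i hij) hα p q (hpq · i hij) hne
    obtain ⟨w, hw⟩ := ih hy (fun a => update (p a.1) i y) (fun a => update (q a.1) i y)
      (fun a k hk => by
        by_cases hki : k = i
        · subst hki
          simp
        · simp [hki, hpq a k hk])
      (fun a => a.2)
      (fun a b k hk hkj => by
        by_cases hki : k = i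
        · subst hki
          simp
        · simpa [hki] using hconst a b k (by simp [hk, hki]) hkj)
    simp only [update_of_ne (Ne.symm hij)] at hw
    exact ⟨w, hw.trans_le (mk_preimage_of_injective _ _ Subtype.val_injective)⟩

end SeparatelyContinuous

section Blocks

variable {ι : Type*} [DecidableEq ι] [Fintype ι] {β : Type*} [TopologicalSpace β] [T2Space β]
  {S : ι → Type u} {X : ∀ i, S i → Type u} [∀ i s, TopologicalSpace (X i s)]
  {f : (∀ i s, X i s) → β}

lemma SeparatelyContinuous.eq_of_forall_mem_iUnion_essentialCoords (hf : SeparatelyContinuous f)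
    {u v : ∀ i s, X i s}
    (huv : ∀ i, ∀ s ∈ ⋃ w, essentialCoords (fun y => f (update w i y)), u i s = v i s) :
    f u = f v := by
  refine (Finset.piecewise_univ v u ▸
    Finset.univ.apply_piecewise_eq_of_forall_update f fun i _ x hxi => ?_).symm
  conv_rhs => rw [← update_eq_self i x]
  exact (hf i x).dependsOn_essentialCoords fun s hs =>
    (huv i s (mem_iUnion.2 ⟨x, hs⟩)).symm.trans (congrFun hxi s).symm

variable [FirstCountableTopology β]

lemma SeparatelyContinuous.mk_iUnion_essentialCoords_le (hc : ℵ₀ ≤ c)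
    (hX : ∀ i, PropIII c (∀ s, X i s)) (hf : SeparatelyContinuous f) (j : ι) :
    #(⋃ w, essentialCoords fun y => f (update w j y)) ≤ c := by
  by_contra! hlarge
  have hwit : ∀ s : ⋃ w, essentialCoords fun y => f (update w j y), ∃ w, ∃ x z : ∀ t, X j t,
      (∀ t ≠ (s : S j), x t = z t) ∧ f (update w j x) ≠ f (update w j z) := fun s => by
    obtain ⟨w, x, z, hxz, hfxz⟩ := mem_iUnion.1 s.2
    exact ⟨w, x, z, hxz, hfxz⟩
  choose w x z hxz hfxz using hwit
  obtain ⟨w', hw'⟩ := hf.exists_lt_mk_setOf_ne_update (j := j) (fun i _ => hX i) Finset.univ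
    hlarge (fun s => update (w s) j (x s)) (fun s => update (w s) j (z s))
    (fun s i hi => by simp [update_of_ne hi]) hfxz fun _ _ i hi => absurd (Finset.mem_univ i) hi
  simp only [update_self] at hw'
  refine hw'.not_ge <| (mk_le_mk_of_subset fun s hs => ?_).trans <|
    (mk_preimage_of_injective _ _ Subtype.val_injective).trans
      ((hf j w').mk_essentialCoords_le hc (hX j))
  exact ⟨x s, z s, hxz s, hs⟩

theorem SeparatelyContinuous.exists_determining_coords_mk_le (hc : ℵ₀ ≤ c)
    (hX : ∀ i s, ∃ D : Set (X i s), Dense D ∧ #D ≤ c) (hf : SeparatelyContinuous f) :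
    ∃ T : ∀ i, Set (S i), (∀ i, #(T i) ≤ c) ∧
      ∀ u v : ∀ i s, X i s, (∀ i, ∀ s ∈ T i, u i s = v i s) → f u = f v :=
  have hX' := fun i => propIII_pi hc (hX i)
  ⟨fun i => ⋃ w, essentialCoords fun y => f (update w i y),
    hf.mk_iUnion_essentialCoords_le hc hX', fun _ _ => hf.eq_of_forall_mem_iUnion_essentialCoords⟩

end Blocks

/-- In a space of density `> c`, for some `r` the maximal `r`-separated sets cannot all
have at most `c` points, since for `r = 1 / (m + 1)` their union is dense. -/
lemma Metric.exists_lt_mk_pairwise_le_dist {M : Type u} [PseudoMetricSpace M] (hc : ℵ₀ ≤ c)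
    (hM : ∀ D : Set M, Dense D → c < #D) :
    ∃ r > 0, ∃ N : Set M, c < #N ∧ N.Pairwise fun x y => r ≤ dist x y := by
  choose N hN using fun m : ℕ =>
    exists_maximal_pairwise_subset (fun x y : M => 1 / (m + 1 : ℝ) ≤ dist x y) univ
  have hdense : Dense (⋃ m, N m) := Metric.dense_iff.2 fun z ε hε => by
    obtain ⟨m, hm⟩ := exists_nat_one_div_lt hε
    by_cases hz : z ∈ N m
    · exact ⟨z, mem_ball_self hε, mem_iUnion.2 ⟨m, hz⟩⟩
    obtain ⟨y, hy, hzy⟩ := (hN m).exists_not_rel_of_notMem (mem_univ z) hz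
    refine ⟨y, ?_, mem_iUnion.2 ⟨m, hy⟩⟩
    rw [mem_ball, dist_comm]
    rw [dist_comm y z, and_self, not_le] at hzy
    exact hzy.trans hm
  by_contra! hsmall
  refine (hM _ hdense).not_ge ?_
  rw [← Equiv.ulift.{u}.surjective.iUnion_comp]
  exact mk_iUnion_le_of_le hc (mk_le_aleph0.trans hc) fun m =>
    not_lt.1 fun h => hsmall _ Nat.one_div_pos_of_nat _ h (hN _).prop.2

/-- Bumps of radius `r / 4` around the points `y k` have locally finite supports. -/
lemma exists_continuous_eq_of_pairwise_le_dist {Z M ι : Type*} [TopologicalSpace Z]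
    [PseudoMetricSpace M] {π : Z → M} (hπ : Continuous π) {r : ℝ} (hr : 0 < r) {y : ι → M}
    (hy : Pairwise fun k l => r ≤ dist (y k) (y l)) {g : ι → Z → ℝ} (hg : ∀ k, Continuous (g k)) :
    ∃ F : Z → ℝ, Continuous F ∧ ∀ k x, π x = y k → F x = g k x := by
  set ρ := r / 4 with hρ
  have hρpos : 0 < ρ := by positivity
  let φ (k : ι) (t : M) : ℝ := max (1 - dist t (y k) / ρ) 0
  have hφ : ∀ k t, φ k t ≠ 0 → dist t (y k) < ρ := fun k t h => by
    by_contra! h'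
    exact h (max_eq_right (sub_nonpos.2 ((one_le_div hρpos).2 h')))
  have hballs : LocallyFinite fun k => Metric.ball (y k) ρ := fun m => by
    refine ⟨Metric.ball m ρ, Metric.ball_mem_nhds m hρpos,
      Subsingleton.finite fun k ⟨a, hak, ham⟩ l ⟨b, hbl, hbm⟩ => by_contra fun hkl => ?_⟩
    rw [Metric.mem_ball] at hak ham hbl hbm
    have := dist_triangle4 (y k) a m (y l)
    have := dist_triangle (y l) b m
    linarith [hy hkl, dist_comm (y k) a, dist_comm (y l) b, dist_comm m (y l)]
  refine ⟨fun x => ∑ᶠ k, φ k (π x) * g k x,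
    continuous_finsum (fun k => ((by fun_prop : Continuous (φ k)).comp hπ).mul (hg k))
      ((hballs.preimage_continuous hπ).subset fun k x hx => hφ k _ (left_ne_zero_of_mul hx)),
    fun k x hx => ?_⟩
  show ∑ᶠ l, φ l (π x) * g l x = g k x
  rw [finsum_eq_single _ k fun l hl => ?_]
  · simp [φ, hx]
  · have : φ l (π x) = 0 := by
      by_contra h
      have := hφ l _ h
      rw [hx] at this
      linarith [hy (Ne.symm hl)]
    rw [this, zero_mul]

lemma exists_continuous_ne_of_metrizable {Y : Type*} [TopologicalSpace Y]
    [TopologicalSpace.MetrizableSpace Y] [Nontrivial Y] :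
    ∃ ψ : Y → ℝ, Continuous ψ ∧ ∃ a b, ψ a ≠ ψ b := by
  let _ := TopologicalSpace.metrizableSpaceMetric Y
  obtain ⟨a, b, hab⟩ := exists_pair_ne Y
  exact ⟨fun t => dist t a, continuous_id.dist continuous_const, a, b, by simpa using hab.symm⟩

lemma apply_curry_update_eq_of_notMem {ι : Type*} {S : ι → Type*} {X : ∀ i, S i → Type*}
    [DecidableEq (Σ i, S i)] {β : Type*} {f : (∀ i s, X i s) → β} {T : ∀ i, Set (S i)}
    (hfT : ∀ u v : ∀ i s, X i s, (∀ i, ∀ s ∈ T i, u i s = v i s) → f u = f v) {j : ι} {k : S j}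
    (hk : k ∉ T j) (x : ∀ σ : Σ i, S i, X σ.1 σ.2) (a b : X j k) :
    f (Sigma.curry (update x ⟨j, k⟩ a)) = f (Sigma.curry (update x ⟨j, k⟩ b)) := by
  refine hfT _ _ fun i s hs => ?_
  have : (⟨i, s⟩ : Σ i, S i) ≠ ⟨j, k⟩ := by
    rintro ⟨⟩
    exact hk hs
  simp [Sigma.curry, update_of_ne this]

theorem exists_dense_mk_le_of_forall_continuous_determined {ι : Type*} {S : ι → Type u}
    {X : ∀ i, S i → Type u} [∀ i s, TopologicalSpace (X i s)]
    [∀ i s, TopologicalSpace.MetrizableSpace (X i s)] [∀ i s, Nontrivial (X i s)] (hc : ℵ₀ ≤ c)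
    {j : ι} (hS : c < #(S j))
    (h : ∀ f : (∀ i s, X i s) → ℝ, Continuous f → ∃ T : ∀ i, Set (S i), (∀ i, #(T i) ≤ c) ∧
      ∀ u v : ∀ i s, X i s, (∀ i, ∀ s ∈ T i, u i s = v i s) → f u = f v)
    (i₀ : ι) (s₀ : S i₀) : ∃ D : Set (X i₀ s₀), Dense D ∧ #D ≤ c := by
  classical
  by_contra! hD
  let _ := TopologicalSpace.metrizableSpaceMetric (X i₀ s₀)
  obtain ⟨r, hr, N, hN, hNsep⟩ := Metric.exists_lt_mk_pairwise_le_dist hc hD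
  have hcoords : c < #{k : S j | (⟨j, k⟩ : Σ i, S i) ≠ ⟨i₀, s₀⟩} :=
    lt_mk_compl_of_subsingleton hc hS (subsingleton_singleton.preimage sigma_mk_injective)
  obtain ⟨K, hKsub, hK, ⟨e⟩⟩ := exists_subset_lt_mk_embedding hcoords hN
  choose ψ hψ a b hψab using fun k : S j => exists_continuous_ne_of_metrizable (Y := X j k)
  obtain ⟨F, hF, hFeq⟩ := exists_continuous_eq_of_pairwise_le_dist
    (π := fun x : ∀ i s, X i s => x i₀ s₀) (by fun_prop) hr (y := fun k : K => (e k : X i₀ s₀))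
    (fun k l hkl => hNsep (e k).2 (e l).2 fun h => hkl (e.injective (Subtype.ext h)))
    (g := fun k x => ψ k (x j k)) (fun k => (hψ k).comp (by fun_prop))
  obtain ⟨T, hT, hFT⟩ := h F hF
  obtain ⟨k, hkT⟩ : ∃ k : K, (k : S j) ∉ T j := by
    by_contra! hKT
    exact hK.not_ge ((mk_le_mk_of_subset fun k hk => hKT ⟨k, hk⟩).trans (hT j))
  have hk₀ : (⟨j, k⟩ : Σ i, S i) ≠ ⟨i₀, s₀⟩ := hKsub k.2
  let x : ∀ σ : Σ i, S i, X σ.1 σ.2 :=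
    update (fun _ => Classical.arbitrary _) ⟨i₀, s₀⟩ (e k : X i₀ s₀)
  have hFx : ∀ z : X j k, F (Sigma.curry (update x ⟨j, k⟩ z)) = ψ k z := fun z =>
    (hFeq k _ (by simp [x, Sigma.curry, update_of_ne hk₀.symm])).trans (by simp [Sigma.curry])
  exact hψab k <| (hFx (a k)).symm.trans <|
    (apply_curry_update_eq_of_notMem hFT hkT x _ _).trans (hFx (b k))

theorem stmt12 (c : Cardinal.{u}) (hc : Cardinal.aleph0 ≤ c)
    (n : ℕ) (hn : 0 < n) (S : Fin n → Type u) (X : ∀ i, S i → Type u)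
    [∀ i s, TopologicalSpace (X i s)]
    [∀ i s, TopologicalSpace.MetrizableSpace (X i s)]
    [∀ i s, Nontrivial (X i s)]
    (hS : c < #(S ⟨0, hn⟩)) :
    List.TFAE [
      -- (i) every separately continuous function depends on at most ℵ coordinates
      (∀ f : (∀ i, ∀ s, X i s) → ℝ,
        (∀ (i : Fin n) (x : ∀ j, ∀ s, X j s),
          Continuous fun xi : ∀ s, X i s => f (Function.update x i xi)) →
        ∃ T : ∀ i, Set (S i), (∀ i, #(T i) ≤ c) ∧
          ∀ u v : ∀ i, ∀ s, X i s,
            (∀ i, ∀ s ∈ T i, u i s = v i s) → f u = f v),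
      -- (iii) every continuous function depends on at most ℵ coordinates
      (∀ f : (∀ i, ∀ s, X i s) → ℝ, Continuous f →
        ∃ T : ∀ i, Set (S i), (∀ i, #(T i) ≤ c) ∧
          ∀ u v : ∀ i, ∀ s, X i s,
            (∀ i, ∀ s ∈ T i, u i s = v i s) → f u = f v),
      -- (x) every factor has density at most ℵ
      (∀ i s, ∃ D : Set (X i s), Dense D ∧ #D ≤ c)] := by
  tfae_have 1 → 2 := fun h f hf => h f hf.separatelyContinuous
  tfae_have 3 → 1 := fun h f hf => SeparatelyContinuous.exists_determining_coords_mk_le hc h hf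
  tfae_have 2 → 3 := fun h i s => exists_dense_mk_le_of_forall_continuous_determined hc hS h i s
  tfae_finish
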